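/- arXiv:2406.18433 — 4 statements merged into one kernel-verified Lean document; each statement's English description precedes it below -/
import Mathlib

section
/- Let 0 < μ ≤ γ, β = (1/5)√(μ/γ), and C = √(β² + (1+β)μ/γ). If a sequence satisfies γ_0 ≥ ((C-β)/(C+β))·μ, α_k is the positive solution of 4α_k² = ((1-α_k)γ_k + α_k μ)/γ, and (1+β)γ_{k+1} = (1-α_k)γ_k + α_k μ, then γ_k ≥ ((C-β)/(C+β))·μ for all k ≥ 0. -/
/-!
Put `L = (C - β)/(C + β) μ` and `a₀ = (C - β)/2`. The identity `(C - β)(C + β)γ = (1 + β)μ`, which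
is the definition of `C`, makes `a₀` the positive root of `4γa² = (1 - a)L + aμ` and gives
`(1 - a₀)L + a₀μ = (1 + β)L`. If `γₖ ≥ L`, comparing the quadratic for `αₖ` with this one gives
`αₖ ≥ a₀`, and then `(1 + β)γₖ₊₁ ≥ L + αₖ(μ - L) ≥ L + a₀(μ - L) = (1 + β)L`.
-/

lemma le_of_quadratic_nonneg {p b c a a₀ : ℝ} (hp : 0 < p) (hc : 0 < c) (ha : 0 < a)
    (ha₀ : 0 < a₀) (hroot : p * a₀ ^ 2 - b * a₀ - c = 0) (h : 0 ≤ p * a ^ 2 - b * a - c) :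
    a₀ ≤ a := by
  have hslope : 0 < p * a₀ - b := by
    have : (p * a₀ - b) * a₀ = c := by linear_combination hroot
    exact pos_of_mul_pos_left (this ▸ hc) ha₀.le
  have hfactor : p * a ^ 2 - b * a - c = (a - a₀) * (p * (a + a₀) - b) := by
    linear_combination hroot
  have hpos : 0 < p * (a + a₀) - b := by nlinarith
  nlinarith

lemma lower_bound_step {γ μ β L a₀ a g g' : ℝ} (hγ : 0 < γ) (hL : 0 < L) (hLμ : L ≤ μ)
    (hβ : 0 < 1 + β) (ha₀ : 0 < a₀) (hroot : 4 * γ * a₀ ^ 2 = (1 + β) * L)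
    (hfix : (1 - a₀) * L + a₀ * μ = (1 + β) * L) (ha : a ∈ Set.Ioc (0 : ℝ) 1) (hg : L ≤ g)
    (hquad : 4 * γ * a ^ 2 = (1 - a) * g + a * μ) (hrec : (1 + β) * g' = (1 - a) * g + a * μ) :
    L ≤ g' := by
  obtain ⟨ha0, ha1⟩ := ha
  have hmono : (1 - a) * L + a * μ ≤ (1 - a) * g + a * μ := by gcongr
  have ha₀a : a₀ ≤ a :=
    le_of_quadratic_nonneg (p := 4 * γ) (b := μ - L) (by positivity) hL ha0 ha₀ (by linarith)
      (by linarith)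
  have hstep : (1 + β) * L ≤ (1 + β) * g' := by
    calc (1 + β) * L = L + a₀ * (μ - L) := by linarith
      _ ≤ L + a * (μ - L) := by gcongr
      _ ≤ (1 + β) * g' := by linarith
  exact le_of_mul_le_mul_left hstep hβ

theorem gamma_k_lower_bound
    (μ γ : ℝ) (hμ : 0 < μ) (hμγ : μ ≤ γ)
    (β C : ℝ)
    (hβ : β = (1/5) * Real.sqrt (μ/γ))
    (hC : C = Real.sqrt (β^2 + (1+β) * (μ/γ)))
    (γseq α : ℕ → ℝ)
    (hγ0 : γseq 0 ≥ ((C - β)/(C + β)) * μ)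
    (hα : ∀ k, α k ∈ Set.Ioo (0:ℝ) 1)
    (hαeq : ∀ k, 4 * γ * (α k)^2 = (1 - α k) * γseq k + α k * μ)
    (hγrec : ∀ k, (1 + β) * γseq (k+1) = (1 - α k) * γseq k + α k * μ) :
    ∀ k, γseq k ≥ ((C - β)/(C + β)) * μ := by
  have hγ : 0 < γ := hμ.trans_le hμγ
  have hβpos : 0 < β := by rw [hβ]; have := Real.sqrt_pos.mpr (div_pos hμ hγ); positivity
  have hC2 : C ^ 2 = β ^ 2 + (1 + β) * (μ / γ) := by
    rw [hC, Real.sq_sqrt (by positivity)]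
  have hβC : β < C := by
    rw [hC, Real.lt_sqrt hβpos.le]
    exact lt_add_of_pos_right _ (by positivity)
  have hkey : (C - β) * (C + β) * γ = (1 + β) * μ := by
    field_simp at hC2
    linear_combination hC2
  have hCβ : 0 < C + β := by linarith
  have hLμ : (C - β) / (C + β) * μ ≤ μ := by
    rw [div_mul_eq_mul_div, div_le_iff₀ hCβ]; nlinarith
  have hfix : (1 - (C - β) / 2) * ((C - β) / (C + β) * μ) + (C - β) / 2 * μ
      = (1 + β) * ((C - β) / (C + β) * μ) := by
    field_simp; ring
  have hroot : 4 * γ * ((C - β) / 2) ^ 2 = (1 + β) * ((C - β) / (C + β) * μ) := by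
    rw [div_mul_eq_mul_div, ← mul_div_assoc, eq_div_iff hCβ.ne']
    linear_combination (C - β) * hkey
  intro k
  induction k with
  | zero => exact hγ0
  | succ k ih =>
    exact lower_bound_step hγ (by have := sub_pos.2 hβC; positivity) hLμ (by linarith)
      (by linarith) hroot hfix (Set.Ioo_subset_Ioc_self (hα k)) ih (hαeq k) (hγrec k)
end

section
/- Let 0 < μ ≤ γ and β = (1/5)√(μ/γ). Then (√(β² + (1+β)μ/γ) - β)/2 ≥ (2/5)√(μ/γ). Consequently, any sequence α_k ≥ (√(β²+(1+β)μ/γ)-β)/2 satisfies Π_{i=0}^{k-1}(1-α_i) ≤ (1 - (2/5)√(μ/γ))^k. -/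
/-! With `s = √(μ/γ)` and `β = s/5`, the claimed bound is equivalent to `s ≤ √(β² + (1+β)s²)`,
which holds because `β ≥ 0`. The rate follows by bounding each factor `1 - αᵢ ∈ (0, 1)` by
`1 - (2/5)s`. -/

open Finset

lemma Real.sqrt_le_sqrt_sq_add_one_add_mul {β r : ℝ} (hβ : 0 ≤ β) (hr : 0 ≤ r) :
    √r ≤ √(β ^ 2 + (1 + β) * r) :=
  Real.sqrt_le_sqrt (by nlinarith)

lemma two_fifths_sqrt_le {r : ℝ} (hr : 0 ≤ r) :
    2 / 5 * √r ≤ (√((1 / 5 * √r) ^ 2 + (1 + 1 / 5 * √r) * r) - 1 / 5 * √r) / 2 := by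
  have := Real.sqrt_le_sqrt_sq_add_one_add_mul (β := 1 / 5 * √r) (by positivity) hr
  linarith

lemma prod_range_one_sub_le_pow {α : ℕ → ℝ} {c : ℝ} (hα : ∀ i, α i ≤ 1)
    (hc : ∀ i, 1 - α i ≤ c) (k : ℕ) :
    ∏ i ∈ range k, (1 - α i) ≤ c ^ k := by
  calc ∏ i ∈ range k, (1 - α i) ≤ ∏ _i ∈ range k, c :=
        prod_le_prod (fun i _ => sub_nonneg.mpr (hα i)) (fun i _ => hc i)
    _ = c ^ k := by rw [prod_const, card_range]

theorem alpha_lower_bound_and_rate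
    (μ γ : ℝ) (hμ : 0 < μ) (hμγ : μ ≤ γ)
    (β : ℝ) (hβ : β = (1/5) * Real.sqrt (μ/γ))
    (α : ℕ → ℝ)
    (hα : ∀ k, α k ∈ Set.Ioo (0:ℝ) 1)
    (hαlb : ∀ k, α k ≥ (Real.sqrt (β^2 + (1+β) * (μ/γ)) - β)/2) :
    (Real.sqrt (β^2 + (1+β) * (μ/γ)) - β)/2 ≥ (2/5) * Real.sqrt (μ/γ) ∧
    ∀ k, ∏ i ∈ Finset.range k, (1 - α i) ≤ (1 - (2/5) * Real.sqrt (μ/γ))^k := by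
  have hbound : (Real.sqrt (β^2 + (1+β) * (μ/γ)) - β)/2 ≥ (2/5) * Real.sqrt (μ/γ) :=
    hβ ▸ two_fifths_sqrt_le (div_nonneg hμ.le (hμ.trans_le hμγ).le)
  refine ⟨hbound, prod_range_one_sub_le_pow (fun i => (hα i).2.le) fun i => ?_⟩
  linarith [hαlb i]
end

section
/- For a symmetric matrix A with largest eigenvalue λ_1 and smallest eigenvalue λ_n, and any n×p matrix X with orthonormal columns and G with XᵀG = 0, the quadratic form 2⟨G, G XᵀAX - AG⟩ (the Riemannian Hessian of f(X) = -trace(XᵀAX)) is bounded above by 2(λ_1 - λ_n)‖G‖_F². -/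
/-!
The Hessian form splits as `⟨G, G (XᵀAX)⟩ - ⟨G, AG⟩`. Row by row, the first term is a sum of
values of the quadratic form of the compression `XᵀAX`, which inherits the upper Rayleigh bound
`λ₁` of `A` because `X` is an isometry; column by column, the second term is a sum of values of
the quadratic form of `A`, bounded below by `λₙ`.
-/

open Matrix

namespace Matrix

variable {m n R : Type*} [Fintype m] [Fintype n] [CommRing R]

theorem trace_transpose_mul_mul_eq_sum_rows (G : Matrix m n R) (M : Matrix n n R) :
    (Gᵀ * (G * M)).trace = ∑ i, G i ⬝ᵥ (M *ᵥ G i) := by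
  simp only [trace, diag, mul_apply, transpose_apply, dotProduct, mulVec, Finset.mul_sum]
  rw [Finset.sum_comm]
  refine Finset.sum_congr rfl fun i _ => ?_
  rw [Finset.sum_comm]
  refine Finset.sum_congr rfl fun j _ => Finset.sum_congr rfl fun k _ => ?_
  ring

theorem trace_transpose_mul_mul_eq_sum_cols (A : Matrix m m R) (G : Matrix m n R) :
    (Gᵀ * (A * G)).trace = ∑ j, Gᵀ j ⬝ᵥ (A *ᵥ Gᵀ j) := by
  simp only [trace, diag, mul_apply, transpose_apply, dotProduct, mulVec]

theorem dotProduct_conj_mulVec (X : Matrix m n R) (A : Matrix m m R) (v : n → R) :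
    v ⬝ᵥ ((Xᵀ * A * X) *ᵥ v) = (X *ᵥ v) ⬝ᵥ (A *ᵥ (X *ᵥ v)) := by
  rw [← mulVec_mulVec, ← mulVec_mulVec, dotProduct_mulVec, vecMul_transpose]

theorem dotProduct_mulVec_self_of_isometry [DecidableEq n] {X : Matrix m n R} (hX : Xᵀ * X = 1)
    (v : n → R) :
    (X *ᵥ v) ⬝ᵥ (X *ᵥ v) = v ⬝ᵥ v := by
  rw [dotProduct_mulVec, ← mulVec_transpose, mulVec_mulVec, hX, one_mulVec]

theorem conj_quadForm_le [PartialOrder R] [DecidableEq n] {X : Matrix m n R} (hX : Xᵀ * X = 1)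
    {A : Matrix m m R} {c : R}
    (hA : ∀ x, x ⬝ᵥ (A *ᵥ x) ≤ c * (x ⬝ᵥ x)) (v : n → R) :
    v ⬝ᵥ ((Xᵀ * A * X) *ᵥ v) ≤ c * (v ⬝ᵥ v) := by
  rw [dotProduct_conj_mulVec, ← dotProduct_mulVec_self_of_isometry hX v]
  exact hA (X *ᵥ v)

variable [PartialOrder R] [IsOrderedRing R]

theorem trace_transpose_mul_mul_le {M : Matrix n n R} {c : R}
    (hM : ∀ v, v ⬝ᵥ (M *ᵥ v) ≤ c * (v ⬝ᵥ v)) (G : Matrix m n R) :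
    (Gᵀ * (G * M)).trace ≤ c * (Gᵀ * G).trace := by
  classical
  have hG : Gᵀ * G = Gᵀ * (G * (1 : Matrix n n R)) := by rw [Matrix.mul_one]
  rw [hG, trace_transpose_mul_mul_eq_sum_rows, trace_transpose_mul_mul_eq_sum_rows,
    Finset.mul_sum]
  exact Finset.sum_le_sum fun i _ => by simpa only [one_mulVec] using hM (G i)

theorem le_trace_transpose_mul_mul {A : Matrix m m R} {c : R}
    (hA : ∀ x, c * (x ⬝ᵥ x) ≤ x ⬝ᵥ (A *ᵥ x)) (G : Matrix m n R) :
    c * (Gᵀ * G).trace ≤ (Gᵀ * (A * G)).trace := by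
  classical
  have hG : Gᵀ * G = Gᵀ * ((1 : Matrix m m R) * G) := by rw [Matrix.one_mul]
  rw [hG, trace_transpose_mul_mul_eq_sum_cols, trace_transpose_mul_mul_eq_sum_cols,
    Finset.mul_sum]
  exact Finset.sum_le_sum fun j _ => by simpa only [one_mulVec] using hA (Gᵀ j)

end Matrix

theorem hessian_upper_bound_general
    (n p : ℕ)
    (A : Matrix (Fin n) (Fin n) ℝ)
    (lam1 lamn : ℝ)
    (hub : ∀ x : Fin n → ℝ, x ⬝ᵥ (A *ᵥ x) ≤ lam1 * (x ⬝ᵥ x))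
    (hlb : ∀ x : Fin n → ℝ, lamn * (x ⬝ᵥ x) ≤ x ⬝ᵥ (A *ᵥ x))
    (X : Matrix (Fin n) (Fin p) ℝ) (hX : Xᵀ * X = 1)
    (G : Matrix (Fin n) (Fin p) ℝ) :
    2 * (Gᵀ * (G * (Xᵀ * A * X) - A * G)).trace
      ≤ 2 * (lam1 - lamn) * (Gᵀ * G).trace := by
  have hcompressed := trace_transpose_mul_mul_le (conj_quadForm_le hX hub) G
  have hA := le_trace_transpose_mul_mul hlb G
  rw [Matrix.mul_sub, trace_sub]
  linarith

theorem hessian_upper_bound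
    (n p : ℕ)
    (A : Matrix (Fin n) (Fin n) ℝ) (hA : A.IsSymm)
    (lam1 lamn : ℝ)
    (hub : ∀ x : Fin n → ℝ, x ⬝ᵥ (A *ᵥ x) ≤ lam1 * (x ⬝ᵥ x))
    (hlb : ∀ x : Fin n → ℝ, lamn * (x ⬝ᵥ x) ≤ x ⬝ᵥ (A *ᵥ x))
    (X : Matrix (Fin n) (Fin p) ℝ) (hX : Xᵀ * X = 1)
    (G : Matrix (Fin n) (Fin p) ℝ) (hG : Xᵀ * G = 0) :
    2 * (Gᵀ * (G * (Xᵀ * A * X) - A * G)).trace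
      ≤ 2 * (lam1 - lamn) * (Gᵀ * G).trace :=
  hessian_upper_bound_general n p A lam1 lamn hub hlb X hX G
end

section
/- Geodesic cost restricted to a geodesic on the Grassmann manifold: if X has orthonormal columns, P = UΣVᵀ is a compact SVD of a tangent vector (XᵀP = 0, UᵀU = VᵀV = VVᵀ = I_p, Σ diagonal), and X(η) = XV cos(ηΣ)Vᵀ + U sin(ηΣ)Vᵀ, then -trace(X(η)ᵀ A X(η)) = -Σᵢ (cos²(ησᵢ)aᵢ + 2 sin(ησᵢ)cos(ησᵢ)bᵢ + sin²(ησᵢ)cᵢ), where aᵢ = (VᵀXᵀAXV)ᵢᵢ, bᵢ = (VᵀXᵀAU)ᵢᵢ, cᵢ = (UᵀAU)ᵢᵢ, and σᵢ = Σᵢᵢ. -/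
/-!
Write `C = diag(cos(ησᵢ))`, `S = diag(sin(ησᵢ))` and `W = XVC + US`, so that `X(η) = WVᵀ`.
Since `VᵀV = I`, the trace is invariant under the conjugation by `V`, hence
`tr(X(η)ᵀAX(η)) = tr(WᵀAW)`. Expanding `WᵀAW` into four blocks sandwiched between diagonal
matrices, each trace is a weighted sum of diagonal entries, and the symmetry of `A` identifies the
two cross terms.
-/

open Matrix

namespace Matrix

variable {m n R : Type*} [Fintype m] [Fintype n] [DecidableEq n] [CommRing R]

theorem diagonal_mul_mul_diagonal_apply_self (d e : n → R) (M : Matrix n n R) (i : n) :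
    (diagonal d * M * diagonal e) i i = d i * M i i * e i := by
  rw [mul_diagonal, diagonal_mul]

theorem trace_mul_mul_transpose_of_transpose_mul_self_eq_one {V : Matrix n n R}
    (hV : Vᵀ * V = 1) (M : Matrix n n R) : (V * M * Vᵀ).trace = M.trace := by
  rw [trace_mul_cycle, hV, one_mul]

theorem IsSymm.trace_transpose_mul_mul_of_mul_diagonal_add_mul_diagonal {A : Matrix m m R}
    (hA : A.IsSymm) (Y U : Matrix m n R) (c s : n → R) :
    ((Y * diagonal c + U * diagonal s)ᵀ * A * (Y * diagonal c + U * diagonal s)).trace =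
      ∑ i, (c i ^ 2 * (Yᵀ * A * Y) i i + 2 * s i * c i * (Yᵀ * A * U) i i
        + s i ^ 2 * (Uᵀ * A * U) i i) := by
  have hblocks : (Y * diagonal c + U * diagonal s)ᵀ * A * (Y * diagonal c + U * diagonal s) =
      diagonal c * (Yᵀ * A * Y) * diagonal c + diagonal s * (Uᵀ * A * Y) * diagonal c
        + (diagonal c * (Yᵀ * A * U) * diagonal s + diagonal s * (Uᵀ * A * U) * diagonal s) := by
    simp only [transpose_add, transpose_mul, diagonal_transpose, Matrix.add_mul, Matrix.mul_add,
      Matrix.mul_assoc]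
  have hcross : ∀ i, (Uᵀ * A * Y) i i = (Yᵀ * A * U) i i := fun i => by
    rw [← transpose_apply (Yᵀ * A * U), transpose_mul, transpose_mul, hA.eq, transpose_transpose,
      Matrix.mul_assoc]
  rw [hblocks, trace]
  refine Finset.sum_congr rfl fun i _ => ?_
  simp only [diag_apply, add_apply, diagonal_mul_mul_diagonal_apply_self, hcross]
  ring

end Matrix

theorem rayleigh_along_geodesic_general
    (n p : ℕ)
    (A : Matrix (Fin n) (Fin n) ℝ) (hA : A.IsSymm)
    (X U : Matrix (Fin n) (Fin p) ℝ) (V : Matrix (Fin p) (Fin p) ℝ)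
    (σ : Fin p → ℝ)
    (hV : Vᵀ * V = 1)
    (η : ℝ)
    (Xη : Matrix (Fin n) (Fin p) ℝ)
    (hXη : Xη = X * V * Matrix.diagonal (fun i => Real.cos (η * σ i)) * Vᵀ
                + U * Matrix.diagonal (fun i => Real.sin (η * σ i)) * Vᵀ) :
    -(Xηᵀ * A * Xη).trace =
      -∑ i : Fin p,
        (Real.cos (η * σ i)^2 * (Vᵀ * Xᵀ * A * X * V) i i
          + 2 * Real.sin (η * σ i) * Real.cos (η * σ i) * (Vᵀ * Xᵀ * A * U) i i
          + Real.sin (η * σ i)^2 * (Uᵀ * A * U) i i) := by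
  set W := X * V * diagonal (fun i => Real.cos (η * σ i))
    + U * diagonal (fun i => Real.sin (η * σ i))
  have hconj : Xηᵀ * A * Xη = V * (Wᵀ * A * W) * Vᵀ := by
    rw [hXη, ← Matrix.add_mul, transpose_mul, transpose_transpose]
    simp only [W, Matrix.mul_assoc]
  rw [hconj, trace_mul_mul_transpose_of_transpose_mul_self_eq_one hV,
    hA.trace_transpose_mul_mul_of_mul_diagonal_add_mul_diagonal]
  simp only [transpose_mul, Matrix.mul_assoc]

theorem rayleigh_along_geodesic
    (n p : ℕ)
    (A : Matrix (Fin n) (Fin n) ℝ) (hA : A.IsSymm)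
    (X U : Matrix (Fin n) (Fin p) ℝ) (V : Matrix (Fin p) (Fin p) ℝ)
    (σ : Fin p → ℝ)
    (hX : Xᵀ * X = 1) (hU : Uᵀ * U = 1) (hXU : Xᵀ * U = 0)
    (hV : Vᵀ * V = 1) (hV' : V * Vᵀ = 1)
    (η : ℝ)
    (Xη : Matrix (Fin n) (Fin p) ℝ)
    (hXη : Xη = X * V * Matrix.diagonal (fun i => Real.cos (η * σ i)) * Vᵀ
                + U * Matrix.diagonal (fun i => Real.sin (η * σ i)) * Vᵀ) :
    -(Xηᵀ * A * Xη).trace =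
      -∑ i : Fin p,
        (Real.cos (η * σ i)^2 * (Vᵀ * Xᵀ * A * X * V) i i
          + 2 * Real.sin (η * σ i) * Real.cos (η * σ i) * (Vᵀ * Xᵀ * A * U) i i
          + Real.sin (η * σ i)^2 * (Uᵀ * A * U) i i) :=
  rayleigh_along_geodesic_general n p A hA X U V σ hV η Xη hXη
end
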